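/- For every integer m ≥ 1 there exists an infinitely differentiable function s : ℝ → ℝ such that s''(x) = −m·s(x)^{2m−1} for all x ∈ ℝ, s(0) = 0 and s'(0) = 1. (This is the global generalized sine function sin_{2m,2} constructed in the paper.) -/

import Mathlib

open Set Metric Filter Topology

private noncomputable def gsV (m : ℕ) : ℝ × ℝ → ℝ × ℝ := fun p => (p.2, -(m:ℝ) * p.1 ^ (2*m-1))

private noncomputable def gsC (m : ℕ) : ℝ := (m:ℝ) * 2^(2*m) + 2

private noncomputable def gsE (m : ℕ) : ℝ := 1 / gsC m

private lemma gsC_pos (m : ℕ) : 0 < gsC m := by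
  unfold gsC; positivity

private lemma gsE_pos (m : ℕ) : 0 < gsE m := by
  unfold gsE; have := gsC_pos m; positivity

private lemma gsV_contDiff (m : ℕ) : ContDiff ℝ 1 (gsV m) :=
  contDiff_snd.prodMk (contDiff_const.mul (contDiff_fst.pow _))

private lemma gsV_norm_le (m : ℕ) {p : ℝ × ℝ} (hp : p ∈ closedBall (0 : ℝ × ℝ) 2) :
    ‖gsV m p‖ ≤ gsC m := by
  have hp' : ‖p‖ ≤ 2 := by simpa using mem_closedBall_zero_iff.mp hp
  have h1 : ‖p.1‖ ≤ 2 := le_trans (norm_fst_le p) hp'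
  have h2 : ‖p.2‖ ≤ 2 := le_trans (norm_snd_le p) hp'
  have hnorm : ‖gsV m p‖ = max ‖p.2‖ ‖-(m:ℝ) * p.1 ^ (2*m-1)‖ := rfl
  rw [hnorm]
  have hC : (0:ℝ) ≤ (m:ℝ) * 2^(2*m) := by positivity
  apply max_le
  · unfold gsC; linarith
  · have : ‖-(m:ℝ) * p.1 ^ (2*m-1)‖ = (m:ℝ) * ‖p.1‖ ^ (2*m-1) := by
      rw [norm_mul, norm_neg, norm_pow]
      norm_num
    rw [this]
    have hb : ‖p.1‖ ^ (2*m-1) ≤ 2 ^ (2*m-1) := by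
      gcongr
    have hb2 : (2:ℝ) ^ (2*m-1) ≤ 2 ^ (2*m) := by
      apply pow_le_pow_right₀ one_le_two
      omega
    unfold gsC
    nlinarith [Nat.cast_nonneg (α := ℝ) m]

private lemma gsV_exists_lip (m : ℕ) :
    ∃ L : NNReal, LipschitzOnWith L (gsV m) (closedBall (0 : ℝ × ℝ) 2) := by
  have hc := gsV_contDiff m
  have hcont : ContinuousOn (fderiv ℝ (gsV m)) (closedBall (0 : ℝ × ℝ) 2) :=
    (hc.continuous_fderiv one_ne_zero).continuousOn
  obtain ⟨M, hM⟩ := (isCompact_closedBall (0 : ℝ × ℝ) 2).exists_bound_of_continuousOn hcont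
  refine ⟨⟨max M 0, le_max_right _ _⟩, ?_⟩
  apply (convex_closedBall _ _).lipschitzOnWith_of_nnnorm_hasFDerivWithin_le
    (f' := fun x => fderiv ℝ (gsV m) x)
    (fun x _ => ((hc.differentiable one_ne_zero) x).hasFDerivAt.hasFDerivWithinAt)
  intro x hx
  have hb : ‖fderiv ℝ (gsV m) x‖ ≤ max M 0 := (hM x hx).trans (le_max_left _ _)
  exact hb

private lemma picard_step (m : ℕ) {L : NNReal}
    (hL : LipschitzOnWith L (gsV m) (closedBall (0 : ℝ × ℝ) 2))
    (t₀ : ℝ) {x₀ : ℝ × ℝ} (hx₀ : ‖x₀‖ ≤ 1) :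
    ∃ f : ℝ → ℝ × ℝ, f t₀ = x₀ ∧ ∀ t ∈ Icc (t₀ - gsE m) (t₀ + gsE m),
      HasDerivWithinAt f (gsV m (f t)) (Icc (t₀ - gsE m) (t₀ + gsE m)) t := by
  have hC := gsC_pos m
  have hε := gsE_pos m
  have hsub : closedBall x₀ 1 ⊆ closedBall (0 : ℝ × ℝ) 2 := by
    apply closedBall_subset_closedBall'
    have : dist x₀ 0 ≤ 1 := by simpa [dist_eq_norm] using hx₀
    linarith
  have ht : t₀ ∈ Icc (t₀ - gsE m) (t₀ + gsE m) := ⟨by linarith, by linarith⟩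
  have hpl : IsPicardLindelof (fun _ x => gsV m x) (⟨t₀, ht⟩ : Icc (t₀ - gsE m) (t₀ + gsE m))
      x₀ 1 0 ⟨gsC m, hC.le⟩ L :=
    { lipschitzOnWith := fun t _ => hL.mono (by simpa using hsub)
      continuousOn := fun x _ => continuousOn_const
      norm_le := fun t _ x hx => gsV_norm_le m (hsub (by simpa using hx))
      mul_max_le := by
        show gsC m * max ((t₀ + gsE m) - t₀) (t₀ - (t₀ - gsE m)) ≤ (1:ℝ) - 0
        rw [add_sub_cancel_left, sub_sub_cancel, max_self, sub_zero]
        unfold gsE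
        rw [mul_one_div, div_self hC.ne']
        }
  exact hpl.exists_eq_forall_mem_Icc_hasDerivWithinAt₀

private lemma energy_eq (m : ℕ) {a b : ℝ} {f : ℝ → ℝ × ℝ}
    (hf : ∀ t ∈ Icc a b, HasDerivWithinAt f (gsV m (f t)) (Icc a b) t)
    {t u : ℝ} (ht : t ∈ Icc a b) (hu : u ∈ Icc a b) :
    (f t).1 ^ (2*m) + (f t).2 ^ 2 = (f u).1 ^ (2*m) + (f u).2 ^ 2 := by
  have hE : ∀ x ∈ Icc a b,
      HasDerivWithinAt (fun t => (f t).1 ^ (2*m) + (f t).2 ^ 2) 0 (Icc a b) x := by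
    intro x hx
    have h1 : HasDerivWithinAt (fun t => (f t).1) ((f x).2) (Icc a b) x := by
      have := (ContinuousLinearMap.fst ℝ ℝ ℝ).hasFDerivAt.comp_hasDerivWithinAt x (hf x hx)
      simpa [gsV, Function.comp_def] using this
    have h2 : HasDerivWithinAt (fun t => (f t).2) (-(m:ℝ) * (f x).1 ^ (2*m-1)) (Icc a b) x := by
      have := (ContinuousLinearMap.snd ℝ ℝ ℝ).hasFDerivAt.comp_hasDerivWithinAt x (hf x hx)
      simpa [gsV, Function.comp_def] using this
    have := (h1.fun_pow (2*m)).fun_add (h2.fun_pow 2)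
    refine this.congr_deriv ?_
    push_cast
    ring
  have := (convex_Icc a b).norm_image_sub_le_of_norm_hasDerivWithin_le hE
    (fun x _ => norm_zero.le) hu ht
  have h0 : ((f t).1 ^ (2*m) + (f t).2 ^ 2) - ((f u).1 ^ (2*m) + (f u).2 ^ 2) = 0 := by
    rw [← norm_le_zero_iff]
    simpa using this
  linarith

private lemma sol_norm_le (m : ℕ) (hm : 1 ≤ m) {a b : ℝ} {f : ℝ → ℝ × ℝ}
    (hf : ∀ t ∈ Icc a b, HasDerivWithinAt f (gsV m (f t)) (Icc a b) t)
    (h0 : (0:ℝ) ∈ Icc a b) (hf0 : f 0 = (0, 1))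
    {t : ℝ} (ht : t ∈ Icc a b) : ‖f t‖ ≤ 1 := by
  have hE := energy_eq m hf ht h0
  rw [hf0] at hE
  have h2m : 2*m ≠ 0 := by omega
  have hE1 : (f t).1 ^ (2*m) + (f t).2 ^ 2 = 1 := by
    rw [hE]
    simp [zero_pow h2m]
  have hnn1 : (0:ℝ) ≤ (f t).1 ^ (2*m) := by
    rw [pow_mul]
    exact pow_nonneg (sq_nonneg _) m
  have hnn2 : (0:ℝ) ≤ (f t).2 ^ 2 := sq_nonneg _
  have hb1 : ‖(f t).1‖ ≤ 1 := by
    have habs : |(f t).1| ^ (2*m) ≤ 1 := by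
      rw [← abs_pow]
      rw [abs_of_nonneg hnn1]
      linarith
    rw [Real.norm_eq_abs]
    exact (pow_le_one_iff_of_nonneg (abs_nonneg _) h2m).mp habs
  have hb2 : ‖(f t).2‖ ≤ 1 := by
    have : (f t).2 ^ 2 ≤ 1 := by linarith
    rw [Real.norm_eq_abs]
    nlinarith [abs_nonneg (f t).2, sq_abs (f t).2]
  calc ‖f t‖ = max ‖(f t).1‖ ‖(f t).2‖ := by rw [Prod.norm_def]
  _ ≤ 1 := max_le hb1 hb2

private lemma glue_sol (m : ℕ) {l a r : ℝ} (hla : l ≤ a) (har : a ≤ r)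
    {f g : ℝ → ℝ × ℝ} (hfa : g a = f a)
    (hf : ∀ t ∈ Icc l a, HasDerivWithinAt f (gsV m (f t)) (Icc l a) t)
    (hg : ∀ t ∈ Icc a r, HasDerivWithinAt g (gsV m (g t)) (Icc a r) t) :
    ∃ h : ℝ → ℝ × ℝ, EqOn h f (Icc l a) ∧ EqOn h g (Icc a r) ∧
      ∀ t ∈ Icc l r, HasDerivWithinAt h (gsV m (h t)) (Icc l r) t := by
  set h : ℝ → ℝ × ℝ := fun t => if t ≤ a then f t else g t with hh
  have hEf : EqOn h f (Icc l a) := fun u hu => by simp [hh, hu.2]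
  have hEg : EqOn h g (Icc a r) := by
    intro u hu
    by_cases h' : u ≤ a
    · have : u = a := le_antisymm h' hu.1
      simp [hh, this, hfa]
    · simp [hh, h']
  refine ⟨h, hEf, hEg, ?_⟩
  intro t ht
  rw [← Icc_union_Icc_eq_Icc hla har]
  apply HasDerivWithinAt.union
  · by_cases h1 : t ≤ a
    · have htm : t ∈ Icc l a := ⟨ht.1, h1⟩
      have h2 := hf t htm
      rw [← hEf htm] at h2
      exact h2.congr (fun u hu => hEf hu) (hEf htm)
    · have : t ∉ closure (Icc l a) := by
        rw [isClosed_Icc.closure_eq]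
        intro hmem
        exact h1 hmem.2
      exact hasDerivWithinAt_iff_hasFDerivWithinAt.mpr (HasFDerivWithinAt.of_notMem_closure this)
  · by_cases h1 : a ≤ t
    · have htm : t ∈ Icc a r := ⟨h1, ht.2⟩
      have h2 := hg t htm
      rw [← hEg htm] at h2
      exact h2.congr (fun u hu => hEg hu) (hEg htm)
    · have : t ∉ closure (Icc a r) := by
        rw [isClosed_Icc.closure_eq]
        intro hmem
        exact h1 hmem.1
      exact hasDerivWithinAt_iff_hasFDerivWithinAt.mpr (HasFDerivWithinAt.of_notMem_closure this)

private lemma exists_sol (m : ℕ) (hm : 1 ≤ m) {L : NNReal}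
    (hL : LipschitzOnWith L (gsV m) (closedBall (0 : ℝ × ℝ) 2)) (n : ℕ) :
    ∃ f : ℝ → ℝ × ℝ, f 0 = (0, 1) ∧
      ∀ t ∈ Icc (-(((n:ℝ)+1) * gsE m)) (((n:ℝ)+1) * gsE m),
        HasDerivWithinAt f (gsV m (f t)) (Icc (-(((n:ℝ)+1) * gsE m)) (((n:ℝ)+1) * gsE m)) t := by
  have hε := gsE_pos m
  have hone : ‖((0 : ℝ), (1 : ℝ))‖ ≤ 1 := by
    rw [Prod.norm_def]
    simp
  induction n with
  | zero =>
    obtain ⟨f, hf0, hf⟩ := picard_step m hL 0 hone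
    refine ⟨f, hf0, ?_⟩
    have harith1 : (((0:ℕ):ℝ)+1) * gsE m = 0 + gsE m := by push_cast; ring
    have harith2 : -((((0:ℕ):ℝ)+1) * gsE m) = 0 - gsE m := by push_cast; ring
    rw [harith2, harith1]
    exact hf
  | succ n ih =>
    obtain ⟨f, hf0, hf⟩ := ih
    set A : ℝ := ((n:ℝ)+1) * gsE m with hA
    have hApos : 0 < A := by positivity
    have h0A : (0:ℝ) ∈ Icc (-A) A := ⟨by linarith, by linarith⟩
    -- extend right
    have hxr : ‖f A‖ ≤ 1 := sol_norm_le m hm hf h0A hf0 (right_mem_Icc.mpr (by linarith))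
    obtain ⟨g, hg0, hg⟩ := picard_step m hL A hxr
    have hg' : ∀ t ∈ Icc A (A + gsE m),
        HasDerivWithinAt g (gsV m (g t)) (Icc A (A + gsE m)) t := by
      intro t htmem
      exact (hg t ⟨by linarith [htmem.1], htmem.2⟩).mono (Icc_subset_Icc (by linarith) le_rfl)
    obtain ⟨h, hhf, hhg, hh⟩ := glue_sol m (by linarith : -A ≤ A) (by linarith) hg0 hf hg'
    have hh0 : h 0 = (0, 1) := by rw [hhf h0A]; exact hf0
    -- extend left
    have hmA : -A ∈ Icc (-A) A := ⟨le_refl _, by linarith⟩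
    have hxl : ‖h (-A)‖ ≤ 1 := by
      rw [hhf hmA]
      exact sol_norm_le m hm hf h0A hf0 hmA
    obtain ⟨q, hq0, hq⟩ := picard_step m hL (-A) hxl
    have hq' : ∀ t ∈ Icc (-A - gsE m) (-A),
        HasDerivWithinAt q (gsV m (q t)) (Icc (-A - gsE m) (-A)) t := by
      intro t htmem
      exact (hq t ⟨htmem.1, by linarith [htmem.2]⟩).mono (Icc_subset_Icc le_rfl (by linarith))
    obtain ⟨w, hwq, hwh, hw⟩ := glue_sol m (by linarith : -A - gsE m ≤ -A)
      (by linarith : -A ≤ A + gsE m) hq0.symm hq' hh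
    have harith : (((n+1:ℕ):ℝ)+1) * gsE m = A + gsE m := by
      rw [hA]; push_cast; ring
    have harith2 : -((((n+1:ℕ):ℝ)+1) * gsE m) = -A - gsE m := by
      rw [hA]; push_cast; ring
    refine ⟨w, ?_, ?_⟩
    · rw [hwh ⟨by linarith, by linarith⟩]
      exact hh0
    · rw [harith2, harith]
      exact hw
/-- A function with an analytic derivative is analytic. -/
private lemma analyticAt_of_hasDerivAt_analytic {Φ D : ℝ → ℝ} {y₀ : ℝ}
    (hD : AnalyticAt ℝ D y₀) (hΦ : ∀ᶠ w in 𝓝 y₀, HasDerivAt Φ (D w) w) :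
    AnalyticAt ℝ Φ y₀ := by
  obtain ⟨p, hp⟩ := hD
  obtain ⟨r', hr'0, hr'⟩ := ENNReal.lt_iff_exists_nnreal_btwn.mp hp.radius_pos
  have hr'0' : (0:ℝ) < r' := by exact_mod_cast ENNReal.coe_pos.mp hr'0
  have hu : Summable fun n => ‖p n‖ * (r' : ℝ) ^ n := p.summable_norm_mul_pow hr'
  have hps := hasFPowerSeriesAt_iff'.mp hp
  obtain ⟨δ₀, hδ₀, hball⟩ := Metric.eventually_nhds_iff.mp (hΦ.and hps)
  set δ : ℝ := min δ₀ r' with hδdef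
  have hδpos : 0 < δ := lt_min hδ₀ hr'0'
  set t : Set ℝ := ball y₀ δ with htdef
  have hmem : ∀ z ∈ t, HasDerivAt Φ (D z) z ∧
      HasSum (fun n => (z - y₀) ^ n • p.coeff n) (D z) := by
    intro z hz
    exact hball (lt_of_lt_of_le hz (min_le_left _ _))
  -- the termwise antiderivative
  set g : ℕ → ℝ → ℝ := fun n z => (p.coeff n / (n + 1)) * (z - y₀) ^ (n + 1) with hgdef
  set g' : ℕ → ℝ → ℝ := fun n z => p.coeff n * (z - y₀) ^ n with hg'def
  have hderiv : ∀ n z, HasDerivAt (g n) (g' n z) z := by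
    intro n z
    have h1 : HasDerivAt (fun z : ℝ => (z - y₀) ^ (n + 1))
        ((n + 1 : ℕ) * (z - y₀) ^ n * 1) z := by
      simpa using ((hasDerivAt_id z).sub_const y₀).fun_pow (n + 1)
    have h2 := h1.const_mul (p.coeff n / (n + 1))
    refine h2.congr_deriv ?_
    have : ((n:ℝ) + 1) ≠ 0 := by positivity
    simp only [hg'def]
    push_cast
    field_simp
  have hbound : ∀ n z, z ∈ t → ‖g' n z‖ ≤ ‖p n‖ * (r' : ℝ) ^ n := by
    intro n z hz
    have hz' : |z - y₀| ≤ (r' : ℝ) :=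
      le_trans (le_of_lt (mem_ball_iff_norm.mp hz)) (min_le_right _ _)
    have : ‖g' n z‖ = ‖p.coeff n‖ * |z - y₀| ^ n := by
      simp [hg'def, abs_mul, abs_pow]
    rw [this, p.norm_apply_eq_norm_coef]
    gcongr
  have hg0 : Summable fun n => g n y₀ := by
    have : (fun n => g n y₀) = fun _ => (0:ℝ) := by
      funext n; simp [hgdef]
    rw [this]; exact summable_zero
  have hΨderiv : ∀ z ∈ t, HasDerivAt (fun w => ∑' n, g n w) (D z) z := by
    intro z hz
    have key := hasDerivAt_tsum_of_isPreconnected hu isOpen_ball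
      (convex_ball y₀ δ).isPreconnected (fun n y _ => hderiv n y) hbound
      (mem_ball_self hδpos) hg0 hz
    have hsum : HasSum (fun n => g' n z) (D z) := by
      have := (hmem z hz).2
      apply this.congr_fun
      intro n
      simp [hg'def, smul_eq_mul, mul_comm]
    rwa [hsum.tsum_eq] at key
  set Ψ : ℝ → ℝ := fun w => ∑' n, g n w with hΨdef
  -- Φ = Ψ + const on t
  have hconst : ∀ z ∈ t, Φ z = Ψ z + (Φ y₀ - Ψ y₀) := by
    intro z hz
    have hzero : ∀ x ∈ t, HasDerivWithinAt (fun w => Φ w - Ψ w) 0 t x := by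
      intro x hx
      have := ((hmem x hx).1.fun_sub (hΨderiv x hx)).hasDerivWithinAt (s := t)
      simpa using this
    have := (convex_ball y₀ δ).norm_image_sub_le_of_norm_hasDerivWithin_le
      hzero (fun x _ => norm_zero.le) hz (mem_ball_self hδpos)
    have h0 : Φ y₀ - Ψ y₀ - (Φ z - Ψ z) = 0 := by
      rw [← norm_le_zero_iff]
      simpa using this
    linarith [h0]
  -- Ψ is analytic at y₀
  have hΨan : AnalyticAt ℝ Ψ y₀ := by
    set c : ℕ → ℝ := fun k => match k with
      | 0 => 0
      | Nat.succ n => p.coeff n / (n + 1) with hcdef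
    refine ⟨FormalMultilinearSeries.ofScalars ℝ c,
      hasFPowerSeriesAt_iff'.mpr ?_⟩
    have hcoeff : ∀ k, (FormalMultilinearSeries.ofScalars ℝ c).coeff k = c k := by
      intro k
      show FormalMultilinearSeries.ofScalars ℝ c k (fun _ => 1) = c k
      rw [FormalMultilinearSeries.ofScalars_apply_eq]
      simp
    filter_upwards [ball_mem_nhds y₀ hδpos] with z hz
    set w : ℝ := z - y₀ with hwdef
    have hw : |w| < δ := by
      rwa [mem_ball_iff_norm] at hz
    have hwr : |w| ≤ (r' : ℝ) := le_trans (le_of_lt hw) (min_le_right _ _)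
    have hS : Summable fun k => w ^ k • c k := by
      apply Summable.of_norm
      rw [← summable_nat_add_iff 1]
      apply Summable.of_nonneg_of_le (fun n => norm_nonneg _)
        (fun n => ?_) (hu.mul_left (r' : ℝ))
      have h1 : ‖w ^ (n+1) • c (n+1)‖ = |w| ^ (n+1) * (‖p.coeff n‖ / (n+1)) := by
        simp [hcdef, norm_smul, abs_pow, abs_div, abs_of_nonneg (by positivity : (0:ℝ) ≤ (n:ℝ)+1)]
      rw [h1, p.norm_apply_eq_norm_coef]
      have h2 : ‖p.coeff n‖ / ((n:ℝ)+1) ≤ ‖p.coeff n‖ := by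
        apply div_le_self (norm_nonneg _) (by linarith [Nat.cast_nonneg (α := ℝ) n])
      calc |w| ^ (n+1) * (‖p.coeff n‖ / (n+1))
          ≤ ((r':ℝ)) ^ (n+1) * ‖p.coeff n‖ := by
            gcongr
        _ = (r':ℝ) * (‖p.coeff n‖ * (r':ℝ) ^ n) := by ring
    have htsum : ∑' k, w ^ k • c k = Ψ z := by
      rw [hS.tsum_eq_zero_add]
      have : ∀ n : ℕ, w ^ (n+1) • c (n+1) = g n z := by
        intro n
        simp [hcdef, hgdef, smul_eq_mul, hwdef]
        try ring
      simp only [this]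
      simp [hΨdef, hcdef]
    have := hS.hasSum
    rw [htsum] at this
    apply this.congr_fun
    intro k
    rw [hcoeff]
  -- conclude
  have hΦeq : Φ =ᶠ[𝓝 y₀] fun z => Ψ z + (Φ y₀ - Ψ y₀) := by
    filter_upwards [ball_mem_nhds y₀ hδpos] with z hz using hconst z hz
  exact (hΨan.add analyticAt_const).congr hΦeq.symm

/-- If `y' = g ∘ y` near `t₀` with `g` analytic and nonvanishing at `y t₀`, then `y` is
analytic at `t₀`. -/
private lemma analyticAt_of_ode {y g : ℝ → ℝ} {t₀ : ℝ}
    (hy : ∀ᶠ t in 𝓝 t₀, HasDerivAt y (g (y t)) t)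
    (hg : AnalyticAt ℝ g (y t₀)) (hg0 : g (y t₀) ≠ 0) :
    AnalyticAt ℝ y t₀ := by
  have hycont : ContinuousAt y t₀ := hy.self_of_nhds.differentiableAt.continuousAt
  have hgycont : ContinuousAt (fun t => g (y t)) t₀ := hg.continuousAt.comp hycont
  have hstrict : HasStrictDerivAt y (g (y t₀)) t₀ :=
    hasStrictDerivAt_of_hasDerivAt_of_continuousAt hy hgycont
  set P := HasStrictFDerivAt.toOpenPartialHomeomorph y (hstrict.hasStrictFDerivAt_equiv hg0) with hPdef
  have hcoe : ⇑P = y := HasStrictFDerivAt.toOpenPartialHomeomorph_coe (hstrict.hasStrictFDerivAt_equiv hg0)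
  have hsrc : t₀ ∈ P.source :=
    HasStrictFDerivAt.mem_toOpenPartialHomeomorph_source (hstrict.hasStrictFDerivAt_equiv hg0)
  have htgt : y t₀ ∈ P.target := by
    have := HasStrictFDerivAt.image_mem_toOpenPartialHomeomorph_target (hstrict.hasStrictFDerivAt_equiv hg0)
    rwa [hPdef]
  -- the inverse has derivative (g w)⁻¹ near y t₀
  have hsymm_cont : ContinuousAt (⇑P.symm) (y t₀) := P.symm.continuousAt htgt
  have hsymm_t₀ : P.symm (y t₀) = t₀ := by
    have := P.left_inv hsrc
    rwa [hcoe] at this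
  have hτ : ∀ᶠ w in 𝓝 (y t₀), HasDerivAt (⇑P.symm) (g w)⁻¹ w := by
    have h1 : ∀ᶠ w in 𝓝 (y t₀), g w ≠ 0 := hg.continuousAt.eventually_ne hg0
    have h2 : ∀ᶠ w in 𝓝 (y t₀), w ∈ P.target := P.open_target.mem_nhds htgt
    have h3 : ∀ᶠ w in 𝓝 (y t₀), HasDerivAt y (g (y (P.symm w))) (P.symm w) := by
      have : ∀ᶠ u in 𝓝 t₀, HasDerivAt y (g (y u)) u := hy
      have := hsymm_cont (by rwa [hsymm_t₀] : {u | HasDerivAt y (g (y u)) u} ∈ 𝓝 (P.symm (y t₀)))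
      exact this
    filter_upwards [h1, h2, h3] with w hw1 hw2 hw3
    have hyP : y (P.symm w) = w := by
      have := P.right_inv hw2
      rwa [hcoe] at this
    rw [hyP] at hw3
    exact P.hasDerivAt_symm hw2 hw1 (by rwa [hcoe])
  have hτan : AnalyticAt ℝ (⇑P.symm) (y t₀) :=
    analyticAt_of_hasDerivAt_analytic (hg.inv hg0) hτ
  -- analytic inverse function theorem applied to P.symm
  have hd : HasDerivAt (⇑P.symm) (g (y t₀))⁻¹ (y t₀) := hτ.self_of_nhds
  have hne : (g (y t₀))⁻¹ ≠ 0 := inv_ne_zero hg0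
  have hfd : fderiv ℝ (⇑P.symm) (y t₀) =
      (ContinuousLinearEquiv.unitsEquivAut ℝ (Units.mk0 _ hne) : ℝ →L[ℝ] ℝ) := by
    rw [hd.hasFDerivAt.fderiv]
    refine ContinuousLinearMap.ext fun x => ?_
    simp [ContinuousLinearEquiv.unitsEquivAut, Units.smul_def, smul_eq_mul, mul_comm]
  have h0' : t₀ ∈ P.symm.target := by
    rw [OpenPartialHomeomorph.symm_target]; exact hsrc
  have hsymmsymm : P.symm.symm t₀ = y t₀ := by
    rw [OpenPartialHomeomorph.symm_symm, hcoe]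
  have := P.symm.analyticAt_symm h0' (by rwa [hsymmsymm]) (by rwa [hsymmsymm])
  rw [OpenPartialHomeomorph.symm_symm, hcoe] at this
  exact this

/-- Analytic `k`-th root around a positive point. -/
private lemma exists_analytic_root (k : ℕ) (hk : 1 ≤ k) {x₀ : ℝ} (hx : 0 < x₀) :
    ∃ ρ : ℝ → ℝ, AnalyticAt ℝ ρ (x₀ ^ k) ∧ ∀ᶠ x in 𝓝 x₀, ρ (x ^ k) = x := by
  have hstrict : HasStrictDerivAt (fun x : ℝ => x ^ k) ((k : ℝ) * x₀ ^ (k - 1)) x₀ :=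
    hasStrictDerivAt_pow k x₀
  have hne : (k : ℝ) * x₀ ^ (k - 1) ≠ 0 := by
    have hk0 : (0:ℝ) < (k:ℝ) := by exact_mod_cast hk
    positivity
  set P := HasStrictFDerivAt.toOpenPartialHomeomorph _ (hstrict.hasStrictFDerivAt_equiv hne) with hPdef
  have hcoe : ⇑P = fun x : ℝ => x ^ k :=
    HasStrictFDerivAt.toOpenPartialHomeomorph_coe (hstrict.hasStrictFDerivAt_equiv hne)
  have hsrc : x₀ ∈ P.source :=
    HasStrictFDerivAt.mem_toOpenPartialHomeomorph_source (hstrict.hasStrictFDerivAt_equiv hne)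
  have htgt : x₀ ^ k ∈ P.target := by
    have := HasStrictFDerivAt.image_mem_toOpenPartialHomeomorph_target (hstrict.hasStrictFDerivAt_equiv hne)
    rwa [hPdef]
  have hsymmx : P.symm (x₀ ^ k) = x₀ := by
    have := P.left_inv hsrc
    rwa [hcoe] at this
  refine ⟨⇑P.symm, ?_, ?_⟩
  · have han : AnalyticAt ℝ (⇑P) x₀ := by
      rw [hcoe]; exact (analyticAt_id).pow k
    have hfd : fderiv ℝ (⇑P) x₀ =
        (ContinuousLinearEquiv.unitsEquivAut ℝ (Units.mk0 _ hne) : ℝ →L[ℝ] ℝ) := by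
      have hd : HasDerivAt (⇑P) ((k : ℝ) * x₀ ^ (k - 1)) x₀ := by
        rw [hcoe]; exact hstrict.hasDerivAt
      rw [hd.hasFDerivAt.fderiv]
      refine ContinuousLinearMap.ext fun x => ?_
      simp [ContinuousLinearEquiv.unitsEquivAut, Units.smul_def, smul_eq_mul, mul_comm]
    exact P.analyticAt_symm htgt (by rwa [hsymmx]) (by rwa [hsymmx])
  · filter_upwards [P.open_source.mem_nhds hsrc] with x hx'
    have := P.left_inv hx'
    rwa [hcoe] at this

/-- For every integer `m ≥ 1` there exists an infinitely differentiable
function `s : ℝ → ℝ` such that `s''(x) = -m * s(x)^(2m-1)` for all `x`, `s 0 = 0`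
and `s' 0 = 1` (the generalized sine function `sin_{2m,2}`). -/
theorem generalized_sine_exists (m : ℕ) (hm : 1 ≤ m) :
    ∃ s : ℝ → ℝ, ContDiff ℝ (⊤ : ℕ∞) s ∧
      (∀ x : ℝ, deriv (deriv s) x = -(m : ℝ) * s x ^ (2 * m - 1)) ∧
      s 0 = 0 ∧ deriv s 0 = 1 := by
  obtain ⟨L, hL⟩ := gsV_exists_lip m
  have hε := gsE_pos m
  set ε := gsE m with hεdef
  choose F hF0 hF using exists_sol m hm hL
  have hLip1 : ∀ t : ℝ, LipschitzOnWith L (gsV m) (closedBall (0:ℝ×ℝ) 1) :=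
    fun _ => hL.mono (closedBall_subset_closedBall one_le_two)
  have hmemIcc : ∀ (n : ℕ) (t : ℝ), t ∈ Icc (-(((n:ℝ)+1)*ε)) (((n:ℝ)+1)*ε) →
      F n t ∈ closedBall (0:ℝ×ℝ) 1 := by
    intro n t ht
    rw [mem_closedBall_zero_iff]
    have hb : (0:ℝ) ≤ ((n:ℝ)+1)*ε := by positivity
    exact sol_norm_le m hm (hF n) ⟨by linarith, by linarith⟩ (hF0 n) ht
  have hDeriv : ∀ (n : ℕ) (t : ℝ), |t| < ((n:ℝ)+1)*ε →
      HasDerivAt (F n) (gsV m (F n t)) t := by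
    intro n t ht
    have h1 := abs_lt.mp ht
    exact (hF n t ⟨h1.1.le, h1.2.le⟩).hasDerivAt (Icc_mem_nhds h1.1 h1.2)
  have huniq : ∀ (n k : ℕ) (t : ℝ), |t| < ((n:ℝ)+1)*ε → |t| < ((k:ℝ)+1)*ε →
      F n t = F k t := by
    intro n k t hn hk
    set b := min (((n:ℝ)+1)*ε) (((k:ℝ)+1)*ε) with hb
    have hbpos : 0 < b := lt_min (by positivity) (by positivity)
    have hmk : ∀ (j : ℕ), b ≤ ((j:ℝ)+1)*ε → ∀ u ∈ Ioo (-b) b,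
        HasDerivAt (F j) ((fun (_ : ℝ) x => gsV m x) u (F j u)) u ∧
          F j u ∈ closedBall (0:ℝ×ℝ) 1 := by
      intro j hj u hu
      have habs : |u| < ((j:ℝ)+1)*ε := lt_of_lt_of_le (abs_lt.mpr ⟨hu.1, hu.2⟩) hj
      have h1 := abs_lt.mp habs
      exact ⟨hDeriv j u habs, hmemIcc j u ⟨h1.1.le, h1.2.le⟩⟩
    have h0mem : (0:ℝ) ∈ Ioo (-b) b := ⟨by linarith, hbpos⟩
    have := ODE_solution_unique_of_mem_Ioo (fun _ _ => hLip1 0) h0mem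
      (hmk n (min_le_left _ _)) (hmk k (min_le_right _ _)) (by rw [hF0 n, hF0 k])
    have htm : t ∈ Ioo (-b) b := ⟨(abs_lt.mp (lt_min hn hk)).1, (abs_lt.mp (lt_min hn hk)).2⟩
    exact this htm
  have hceil : ∀ t : ℝ, |t| < ((⌈|t|/ε⌉₊ : ℝ)+1)*ε := by
    intro t
    have h1 : |t|/ε ≤ (⌈|t|/ε⌉₊ : ℝ) := Nat.le_ceil _
    rw [div_le_iff₀ hε] at h1
    nlinarith
  set G : ℝ → ℝ×ℝ := fun t => F ⌈|t|/ε⌉₊ t with hGdef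
  have hGF : ∀ (n : ℕ) (t : ℝ), |t| < ((n:ℝ)+1)*ε → G t = F n t :=
    fun n t h => huniq _ n t (hceil t) h
  have hG0 : G 0 = (0,1) := hF0 _
  have hG : ∀ t, HasDerivAt G (gsV m (G t)) t := by
    intro t₀
    have hlt := hceil t₀
    set n := ⌈|t₀|/ε⌉₊ with hndef
    have hopen : {u : ℝ | |u| < ((n:ℝ)+1)*ε} ∈ 𝓝 t₀ :=
      (isOpen_lt continuous_abs continuous_const).mem_nhds hlt
    have hev : G =ᶠ[𝓝 t₀] F n := by
      filter_upwards [hopen] with u hu using hGF n u hu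
    have hFd := hDeriv n t₀ hlt
    have hcongr := hFd.congr_of_eventuallyEq hev
    have heq : G t₀ = F n t₀ := hev.eq_of_nhds
    rw [heq]
    exact hcongr
  -- the two components
  set s : ℝ → ℝ := fun t => (G t).1 with hsdef
  set c : ℝ → ℝ := fun t => (G t).2 with hcdef
  have hs : ∀ t, HasDerivAt s (c t) t := by
    intro t
    have := (ContinuousLinearMap.fst ℝ ℝ ℝ).hasFDerivAt.comp_hasDerivAt t (hG t)
    simpa [gsV, Function.comp_def] using this
  have hc : ∀ t, HasDerivAt c (-(m:ℝ) * s t ^ (2*m-1)) t := by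
    intro t
    have := (ContinuousLinearMap.snd ℝ ℝ ℝ).hasFDerivAt.comp_hasDerivAt t (hG t)
    simpa [gsV, Function.comp_def] using this
  have hEn : ∀ t, HasDerivAt (fun t => s t ^ (2*m) + c t ^ 2) 0 t := by
    intro t
    have := ((hs t).fun_pow (2*m)).fun_add ((hc t).fun_pow 2)
    refine this.congr_deriv ?_
    push_cast
    ring
  have henergy : ∀ t, s t ^ (2*m) + c t ^ 2 = 1 := by
    intro t
    have hconst := is_const_of_deriv_eq_zero (fun u => (hEn u).differentiableAt)
      (fun u => (hEn u).deriv) t 0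
    rw [hconst]
    have hs0 : s 0 = 0 := by rw [hsdef]; simp only; rw [hG0]
    have hc0 : c 0 = 1 := by rw [hcdef]; simp only; rw [hG0]
    rw [hs0, hc0]
    simp [zero_pow (by omega : 2*m ≠ 0)]
  have hscont : Continuous s := continuous_iff_continuousAt.mpr fun t => (hs t).continuousAt
  have hccont : Continuous c := continuous_iff_continuousAt.mpr fun t => (hc t).continuousAt
  -- analyticity of s
  have han : ∀ t₀ : ℝ, AnalyticAt ℝ s t₀ := by
    intro t₀
    by_cases hc0 : c t₀ = 0
    · -- turning point : c t₀ = 0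
      have h2m : 2*m ≠ 0 := by omega
      have hst : s t₀ ^ (2*m) = 1 := by
        have := henergy t₀
        rw [hc0] at this
        nlinarith
      have hnn0 : (0:ℝ) ≤ s t₀ ^ (2*m) := by
        rw [pow_mul]; exact pow_nonneg (sq_nonneg _) m
      have habs1 : |s t₀| = 1 := by
        have h1 : |s t₀| ^ (2*m) = 1 := by rw [← abs_pow, abs_of_nonneg hnn0, hst]
        have hle : |s t₀| ≤ 1 := (pow_le_one_iff_of_nonneg (abs_nonneg _) h2m).mp h1.le
        have hge : 1 ≤ |s t₀| := by
          by_contra hcon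
          push_neg at hcon
          have := pow_lt_one₀ (abs_nonneg _) hcon h2m
          rw [h1] at this
          exact lt_irrefl _ this
        linarith
      set σ : ℝ := s t₀ with hσdef
      have hσ1 : σ = 1 ∨ σ = -1 := (abs_eq zero_le_one).mp habs1
      have hσsq : σ * σ = 1 := by rcases hσ1 with h|h <;> rw [h] <;> norm_num
      have hσne : σ ≠ 0 := by rcases hσ1 with h|h <;> rw [h] <;> norm_num
      have hσodd : σ ^ (2*m-1) = σ := by
        rcases hσ1 with h|h
        · rw [h]; exact one_pow _
        · rw [h]; exact Odd.neg_one_pow ⟨m-1, by omega⟩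
      obtain ⟨ρ, hρan, hρev⟩ := exists_analytic_root (2*m) (by omega) (zero_lt_one (α := ℝ))
      rw [one_pow] at hρan
      have h1ev : ∀ᶠ t in 𝓝 t₀, ρ (|s t| ^ (2*m)) = |s t| := by
        have hc' : ContinuousAt (fun t => |s t|) t₀ := (continuous_abs.comp hscont).continuousAt
        have hmem : {x : ℝ | ρ (x ^ (2*m)) = x} ∈ 𝓝 |s t₀| := by rw [habs1]; exact hρev
        exact hc' hmem
      have h2ev : ∀ᶠ t in 𝓝 t₀, 0 < σ * s t := by
        have hpos : 0 < σ * s t₀ := by rw [← hσdef, hσsq]; norm_num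
        exact ((continuous_const.mul hscont).continuousAt).eventually_mem (Ioi_mem_nhds hpos)
      have hkey2 : ∀ᶠ t in 𝓝 t₀, ρ (1 - c t ^ 2) = σ * s t ∧ s t = σ * ρ (1 - c t ^ 2) := by
        filter_upwards [h1ev, h2ev] with t h1t h2t
        have hnn : (0:ℝ) ≤ s t ^ (2*m) := by rw [pow_mul]; exact pow_nonneg (sq_nonneg _) m
        have hsabs : |s t| = σ * s t := by
          rcases hσ1 with h|h
          · rw [h] at h2t ⊢
            rw [one_mul] at h2t ⊢
            exact abs_of_pos h2t
          · rw [h] at h2t ⊢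
            have hneg : s t < 0 := by linarith
            rw [abs_of_neg hneg]; ring
        have he : 1 - c t ^ 2 = |s t| ^ (2*m) := by
          have := henergy t
          rw [← abs_pow, abs_of_nonneg hnn]
          linarith
        constructor
        · rw [he, h1t, hsabs]
        · rw [he, h1t, hsabs, ← mul_assoc, hσsq, one_mul]
      have hode : ∀ᶠ t in 𝓝 t₀,
          HasDerivAt c ((fun w : ℝ => -(m:ℝ) * σ * ρ (1 - w^2) ^ (2*m-1)) (c t)) t := by
        filter_upwards [hkey2] with t ht
        have hval : -(m:ℝ) * σ * ρ (1 - c t ^ 2) ^ (2*m-1) = -(m:ℝ) * s t ^ (2*m-1) := by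
          rw [ht.1, mul_pow, hσodd]
          linear_combination (-(m:ℝ) * s t ^ (2*m-1)) * hσsq
        show HasDerivAt c (-(m:ℝ) * σ * ρ (1 - c t ^ 2) ^ (2*m-1)) t
        rw [hval]
        exact hc t
      have hρat : AnalyticAt ℝ ρ (1 - c t₀ ^ 2) := by
        rw [hc0]
        norm_num
        exact hρan
      have hin : AnalyticAt ℝ (fun w : ℝ => 1 - w^2) (c t₀) :=
        analyticAt_const.sub (analyticAt_id.pow _)
      have hcompan : AnalyticAt ℝ (fun w : ℝ => ρ (1 - w^2)) (c t₀) := by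
        have h := AnalyticAt.comp (x := c t₀) (g := ρ) (f := fun w : ℝ => 1 - w ^ 2) hρat hin
        simpa [Function.comp_def] using h
      have hgan2 : AnalyticAt ℝ (fun w : ℝ => -(m:ℝ) * σ * ρ (1 - w^2) ^ (2*m-1)) (c t₀) :=
        analyticAt_const.mul (hcompan.pow _)
      have hρ1 : ρ 1 = 1 := by
        have := hρev.self_of_nhds
        rwa [one_pow] at this
      have hg0' : (fun w : ℝ => -(m:ℝ) * σ * ρ (1 - w^2) ^ (2*m-1)) (c t₀) ≠ 0 := by
        show -(m:ℝ) * σ * ρ (1 - c t₀ ^ 2) ^ (2*m-1) ≠ 0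
        rw [hc0]
        have h1 : (1:ℝ) - 0^2 = 1 := by norm_num
        rw [h1, hρ1, one_pow, mul_one]
        have hmne : (m:ℝ) ≠ 0 := by exact_mod_cast (by omega : m ≠ 0)
        exact mul_ne_zero (neg_ne_zero.mpr hmne) hσne
      have hcan : AnalyticAt ℝ c t₀ := analyticAt_of_ode hode hgan2 hg0'
      have hin2 : AnalyticAt ℝ (fun t : ℝ => 1 - c t ^ 2) t₀ :=
        analyticAt_const.sub (hcan.pow _)
      have hsan' : AnalyticAt ℝ (fun t : ℝ => σ * ρ (1 - c t ^ 2)) t₀ := by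
        have h := AnalyticAt.comp (x := t₀) (g := ρ) (f := fun t : ℝ => 1 - c t ^ 2) hρat hin2
        exact analyticAt_const.mul (by simpa [Function.comp_def] using h)
      apply hsan'.congr
      filter_upwards [hkey2] with t ht using ht.2.symm
    · -- c t₀ ≠ 0
      obtain ⟨ρ, hρan, hρev⟩ := exists_analytic_root 2 one_le_two (abs_pos.mpr hc0)
      set σ : ℝ := if 0 < c t₀ then 1 else -1 with hσdef
      have hσc : 0 < σ * c t₀ := by
        rcases lt_trichotomy (c t₀) 0 with h|h|h
        · rw [hσdef, if_neg (not_lt.mpr h.le)]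
          nlinarith
        · exact absurd h hc0
        · rw [hσdef, if_pos h]
          nlinarith
      have hσ1 : σ = 1 ∨ σ = -1 := by
        rw [hσdef]; split_ifs <;> simp
      have hσsq : σ * σ = 1 := by rcases hσ1 with h|h <;> rw [h] <;> norm_num
      have hkey : 1 - s t₀ ^ (2*m) = |c t₀| ^ 2 := by
        have := henergy t₀
        rw [sq_abs]
        linarith
      have hρat : AnalyticAt ℝ ρ (1 - s t₀ ^ (2*m)) := by
        rw [hkey]
        exact hρan
      have hin : AnalyticAt ℝ (fun y : ℝ => 1 - y ^ (2*m)) (s t₀) :=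
        analyticAt_const.sub (analyticAt_id.pow _)
      have hcompan : AnalyticAt ℝ (fun y : ℝ => ρ (1 - y ^ (2*m))) (s t₀) := by
        have h := AnalyticAt.comp (x := s t₀) (g := ρ) (f := fun y : ℝ => 1 - y ^ (2*m)) hρat hin
        simpa [Function.comp_def] using h
      have hgan : AnalyticAt ℝ (fun y : ℝ => σ * ρ (1 - y ^ (2*m))) (s t₀) :=
        analyticAt_const.mul hcompan
      have hsign : ∀ᶠ t in 𝓝 t₀, (fun y : ℝ => σ * ρ (1 - y ^ (2*m))) (s t) = c t := by
        have h1 : ∀ᶠ t in 𝓝 t₀, ρ (|c t| ^ 2) = |c t| := by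
          have hc' : ContinuousAt (fun t => |c t|) t₀ := (continuous_abs.comp hccont).continuousAt
          exact hc' hρev
        have h2 : ∀ᶠ t in 𝓝 t₀, 0 < σ * c t :=
          ((continuous_const.mul hccont).continuousAt).eventually_mem (Ioi_mem_nhds hσc)
        filter_upwards [h1, h2] with t h1t h2t
        have habs : σ * c t = |c t| := by
          rcases hσ1 with h|h
          · rw [h] at h2t ⊢
            rw [one_mul] at h2t ⊢
            exact (abs_of_pos h2t).symm
          · rw [h] at h2t ⊢
            have hneg : c t < 0 := by linarith
            rw [abs_of_neg hneg]; ring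
        have he : 1 - s t ^ (2*m) = |c t| ^ 2 := by
          have := henergy t
          rw [sq_abs]
          linarith
        show σ * ρ (1 - s t ^ (2*m)) = c t
        calc σ * ρ (1 - s t ^ (2*m)) = σ * ρ (|c t| ^ 2) := by rw [he]
        _ = σ * |c t| := by rw [h1t]
        _ = σ * (σ * c t) := by rw [habs]
        _ = c t := by rw [← mul_assoc, hσsq, one_mul]
      have hode : ∀ᶠ t in 𝓝 t₀,
          HasDerivAt s ((fun y : ℝ => σ * ρ (1 - y ^ (2*m))) (s t)) t := by
        filter_upwards [hsign] with t ht
        rw [ht]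
        exact hs t
      have hgval : σ * ρ (1 - s t₀ ^ (2*m)) = c t₀ := hsign.self_of_nhds
      apply analyticAt_of_ode hode hgan
      show σ * ρ (1 - s t₀ ^ (2*m)) ≠ 0
      rw [hgval]
      exact hc0
  refine ⟨s, ?_, ?_, ?_, ?_⟩
  · exact AnalyticOnNhd.contDiff (fun x _ => han x)
  · intro x
    have hds : deriv s = c := funext fun t => (hs t).deriv
    rw [hds]
    exact (hc x).deriv
  · rw [hsdef]; simp only; rw [hG0]
  · have : deriv s 0 = c 0 := (hs 0).deriv
    rw [this, hcdef]; simp only; rw [hG0]
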